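/- Let λ ∈ X be dominant and μ ∈ X with μ ≤ λ. Then Arr_∞(μ, λ) = Σ_{j=1}^{n} max{k ∈ ℕ : μ − k·α_{j,n} ≤ λ} + Σ_{β} ℓ^β(μ), where the second sum runs over the positive roots β = α_{j,k} with k ≤ n − 1 (i.e., the positive roots of the sub-root system generated by α_1, …, α_{n−1}). -/

import Mathlib

open scoped BigOperators

namespace TypeATwisted

/-- `ℤ^{n+1}`. -/
abbrev V (n : ℕ) := Fin (n + 1) → ℤ

/-- The vector `(1,…,1)`. -/
def onesV (n : ℕ) : V n := fun _ => 1

/-- The subgroup `ℤ·(1,…,1)`. -/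
def lineZ (n : ℕ) : AddSubgroup (V n) := AddSubgroup.zmultiples (onesV n)

/-- The weight lattice `X = ℤ^{n+1}/ℤ·(1,…,1)` of `SL_{n+1}`. -/
abbrev X (n : ℕ) := V n ⧸ lineZ n

/-- The quotient map `ℤ^{n+1} → X`. -/
def toX (n : ℕ) : V n →+ X n := QuotientAddGroup.mk' (lineZ n)

/-- The positive root `e_a − e_b` (for `a < b`) as a vector in `ℤ^{n+1}`. -/
def posRootV (n : ℕ) (a b : Fin (n + 1)) : V n := Pi.single a 1 - Pi.single b 1

/-- The positive root `e_a − e_b` (for `a < b`) as an element of `X`. -/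
def posRootX (n : ℕ) (a b : Fin (n + 1)) : X n := toX n (posRootV n a b)

/-- The pairing `μ ↦ μ_a − μ_b` on `ℤ^{n+1}`. -/
def pairV (n : ℕ) (a b : Fin (n + 1)) : V n →+ ℤ :=
  (Pi.evalAddMonoidHom (fun _ => ℤ) a) - (Pi.evalAddMonoidHom (fun _ => ℤ) b)

lemma pairV_ker (n : ℕ) (a b : Fin (n + 1)) : ∀ v ∈ lineZ n, pairV n a b v = 0 := by
  intro v hv
  rw [lineZ, AddSubgroup.mem_zmultiples_iff] at hv
  obtain ⟨k, rfl⟩ := hv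
  simp [pairV, onesV]

/-- The pairing `⟨μ, β^∨⟩ = μ_a − μ_b` for the positive root `β = e_a − e_b`,
well defined on `X`. -/
def pairX (n : ℕ) (a b : Fin (n + 1)) : X n →+ ℤ :=
  QuotientAddGroup.lift (lineZ n) (pairV n a b) (pairV_ker n a b)

/-- The root lattice `ℤΦ ⊆ X`. -/
def rootLattice (n : ℕ) : AddSubgroup (X n) :=
  AddSubgroup.closure {x | ∃ a b : Fin (n + 1), a < b ∧ x = posRootX n a b}

/-- `μ ∈ X` is dominant if it has a weakly decreasing representative. -/
def IsDominant (n : ℕ) (μ : X n) : Prop := ∃ v : V n, Antitone v ∧ toX n v = μ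

/-- `μ ≤ λ` iff `λ − μ ∈ ℤΦ` and `μ` lies in the convex hull of the `S_{n+1}`-orbit
of `λ` inside `ℝ^{n+1}/ℝ·(1,…,1)`. -/
def wle (n : ℕ) (μ lam : X n) : Prop :=
  lam - μ ∈ rootLattice n ∧
  ∃ u v : V n, toX n u = μ ∧ toX n v = lam ∧ ∃ c : ℝ,
    (fun i => (u i : ℝ) + c) ∈
      convexHull ℝ {w : Fin (n + 1) → ℝ |
        ∃ σ : Equiv.Perm (Fin (n + 1)), w = fun i => (v (σ i) : ℝ)}

/-- The untwisted Bruhat edge between `μ − kβ` and `μ` points toward `μ`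
(`β = e_a − e_b`, `a < b`, `k ≠ 0`): `⟨μ,β^∨⟩ ≥ k > 0` or `⟨μ,β^∨⟩ < k < 0`. -/
def edgeToward (n : ℕ) (a b : Fin (n + 1)) (k : ℤ) (μ : X n) : Prop :=
  (0 < k ∧ k ≤ pairX n a b μ) ∨ (k < 0 ∧ pairX n a b μ < k)

/-- The edge between `μ − kβ` and `μ` is `m`-twisted: `β = α_{j,n}` (i.e. `b` is the
last index), and with `c := k − ⟨μ,β^∨⟩` one has `c ≥ 1` and `(c−1)·n + j ≤ m`,
where `j = a + 1` (`1`-based). -/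
def IsTwisted (n : ℕ) (m : ℕ∞) (a b : Fin (n + 1)) (k : ℤ) (μ : X n) : Prop :=
  b = Fin.last n ∧ 1 ≤ k - pairX n a b μ ∧
  (((k - pairX n a b μ - 1).toNat * n + (a : ℕ) + 1 : ℕ) : ℕ∞) ≤ m

/-- In the `m`-twisted Bruhat graph `Γ^m`, the edge between `μ − kβ` and `μ` is directed
toward `μ` iff exactly one of `(μ−kβ) ◁ μ` and `m`-twistedness holds.  (`m = 0` gives
the untwisted Bruhat graph.) -/
def dirToward (n : ℕ) (m : ℕ∞) (a b : Fin (n + 1)) (k : ℤ) (μ : X n) : Prop :=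
  Xor' (edgeToward n a b k μ) (IsTwisted n m a b k μ)

/-- The edge between `ν` and `μ` is directed toward `μ` in `Γ^m`. -/
def EdgeDirToward (n : ℕ) (m : ℕ∞) (ν μ : X n) : Prop :=
  ∃ a b : Fin (n + 1), a < b ∧ ∃ k : ℤ, k ≠ 0 ∧
    ν = μ - k • posRootX n a b ∧ dirToward n m a b k μ

/-- `Arr_m(μ,λ)`: the number of pairs `(β,k) ∈ Φ⁺ × (ℤ∖{0})` with `μ − kβ ≤ λ` and the
edge between `μ − kβ` and `μ` directed toward `μ` in `Γ^m`. -/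
noncomputable def ArrRes (n : ℕ) (m : ℕ∞) (μ lam : X n) : ℕ :=
  {p : (Fin (n + 1) × Fin (n + 1)) × ℤ | p.1.1 < p.1.2 ∧ p.2 ≠ 0 ∧
    wle n (μ - p.2 • posRootX n p.1.1 p.1.2) lam ∧
    dirToward n m p.1.1 p.1.2 p.2 μ}.ncard

/-- `Arr_m(μ)`: the number of pairs `(β,k) ∈ Φ⁺ × (ℤ∖{0})` with the edge between
`μ − kβ` and `μ` directed toward `μ` in `Γ^m`. -/
noncomputable def Arr (n : ℕ) (m : ℕ∞) (μ : X n) : ℕ :=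
  {p : (Fin (n + 1) × Fin (n + 1)) × ℤ | p.1.1 < p.1.2 ∧ p.2 ≠ 0 ∧
    dirToward n m p.1.1 p.1.2 p.2 μ}.ncard

/-- The affine reflection `r_{β,c}(ν) = ν − (c + ⟨ν,β^∨⟩)·β` for `β = e_a − e_b`. -/
def areflect (n : ℕ) (a b : Fin (n + 1)) (c : ℤ) : X n → X n :=
  fun ν => ν - (c + pairX n a b ν) • posRootX n a b

/-- `ℓ^β(μ)`: `⟨μ,β^∨⟩` if `⟨μ,β^∨⟩ ≥ 0`, and `−⟨μ,β^∨⟩ − 1` otherwise. -/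
def ellBeta (n : ℕ) (a b : Fin (n + 1)) (μ : X n) : ℕ :=
  if 0 ≤ pairX n a b μ then (pairX n a b μ).toNat else (-(pairX n a b μ) - 1).toNat

end TypeATwisted

/-!
For `m = ∞` every edge along `α_{j,n}` with `k > ⟨μ, α_{j,n}^∨⟩` is twisted, so such an edge points
toward `μ` exactly when `k > 0`; along the other roots nothing is twisted, and the edges toward `μ`
are the `ℓ^β(μ)` values of `k` between `0` and `⟨μ, β^∨⟩`. It remains to see which `μ - kβ` lie
below `λ`. That condition is membership in the convex hull of `W·λ` modulo `ℝ·(1,…,1)`, which is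
convex, `W`-stable and bounded; so along the line `μ - ℤβ` it cuts out a finite interval containing
`μ` and its reflection `μ - ⟨μ, β^∨⟩β`. Hence every untwisted edge toward `μ` is counted, and the
twisted ones are `k = 1, …, max {k | μ - kα_{j,n} ≤ λ}`.
-/

namespace TypeATwisted

lemma ncard_setOf_fst_snd_eq_sum {α β : Type*} [Fintype α] (P : α → Prop) [DecidablePred P]
    (t : α → Set β) (ht : ∀ a, P a → (t a).Finite) :
    {p : α × β | P p.1 ∧ p.2 ∈ t p.1}.ncard = ∑ a ∈ Finset.univ.filter P, (t a).ncard := by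
  have : ∀ a : {a // P a}, Finite (t a) := fun a => (ht a a.2).to_subtype
  let e : {p : α × β | P p.1 ∧ p.2 ∈ t p.1} ≃ Σ a : {a // P a}, t a :=
    { toFun := fun p => ⟨⟨p.1.1, p.2.1⟩, ⟨p.1.2, p.2.2⟩⟩
      invFun := fun p => ⟨(p.1.1, p.2.1), p.1.2, p.2.2⟩ }
  rw [← Nat.card_coe_set_eq, Nat.card_congr e, Nat.card_sigma,
    Finset.sum_subtype _ (fun a => Finset.mem_filter_univ a) (fun a => (t a).ncard)]
  rfl

lemma sum_filter_lt_fin_succ {n : ℕ} {M : Type*} [AddCommMonoid M]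
    (f : Fin (n + 1) → Fin (n + 1) → M) :
    ∑ p ∈ Finset.univ.filter (fun p : Fin (n + 1) × Fin (n + 1) => p.1 < p.2), f p.1 p.2 =
      ∑ j : Fin n, f j.castSucc (Fin.last n) +
        ∑ p ∈ Finset.univ.filter (fun p : Fin n × Fin n => p.1 < p.2),
          f p.1.castSucc p.2.castSucc := by
  simp only [Finset.sum_filter, Fintype.sum_prod_type, Fin.sum_univ_castSucc,
    Fin.castSucc_lt_castSucc_iff, Fin.castSucc_lt_last, if_true, lt_irrefl, if_false,
    not_lt.2 (Fin.le_last _), Finset.sum_const_zero, add_zero]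
  rw [Finset.sum_add_distrib, add_comm]

variable {n : ℕ}

lemma pairX_toX (a b : Fin (n + 1)) (v : V n) : pairX n a b (toX n v) = v a - v b := rfl

lemma toX_surjective : Function.Surjective (toX n) := QuotientAddGroup.mk'_surjective _

lemma toX_eq_toX_iff {u u' : V n} : toX n u = toX n u' ↔ ∃ d : ℤ, u' = u + d • onesV n := by
  rw [toX, QuotientAddGroup.mk'_eq_mk']
  constructor
  · rintro ⟨_, ⟨d, rfl⟩, h⟩
    exact ⟨d, h.symm⟩
  · rintro ⟨d, rfl⟩
    exact ⟨d • onesV n, ⟨d, rfl⟩, rfl⟩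

lemma pairX_posRootX {a b : Fin (n + 1)} (hab : a ≠ b) : pairX n a b (posRootX n a b) = 2 := by
  simp [posRootX, pairX_toX, posRootV, Pi.single_eq_of_ne hab, Pi.single_eq_of_ne hab.symm]

lemma posRootX_mem_rootLattice {a b : Fin (n + 1)} (hab : a < b) :
    posRootX n a b ∈ rootLattice n :=
  AddSubgroup.subset_closure ⟨a, b, hab, rfl⟩

lemma comp_swap_eq_sub_zsmul_posRootV (u : V n) {a b : Fin (n + 1)} (hab : a ≠ b) :
    u ∘ Equiv.swap a b = u - (u a - u b) • posRootV n a b := by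
  funext i
  rcases eq_or_ne i a with rfl | hia
  · simp [posRootV, Pi.single_eq_of_ne hab]
  rcases eq_or_ne i b with rfl | hib
  · simp [posRootV, Pi.single_eq_of_ne hab.symm]
  simp [posRootV, Equiv.swap_apply_of_ne_of_ne hia hib, Pi.single_eq_of_ne hia,
    Pi.single_eq_of_ne hib]

def permHull (v : V n) : Set (Fin (n + 1) → ℝ) :=
  convexHull ℝ {w | ∃ σ : Equiv.Perm (Fin (n + 1)), w = fun i => (v (σ i) : ℝ)}

/-- `u` lies in `permHull v` modulo `ℝ·(1,…,1)`. -/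
def MemPermHull (u v : V n) : Prop := ∃ c : ℝ, (fun i => (u i : ℝ) + c) ∈ permHull v

lemma add_const_mem_permHull {v : V n} {x : Fin (n + 1) → ℝ} (hx : x ∈ permHull v) (d : ℤ) :
    (fun i => x i + d) ∈ permHull (v + d • onesV n) := by
  have hshift := Set.vadd_mem_vadd_set (a := fun _ : Fin (n + 1) => (d : ℝ)) hx
  rw [permHull, ← convexHull_vadd] at hshift
  have hfun : (fun i => x i + d) = (fun _ : Fin (n + 1) => (d : ℝ)) +ᵥ x :=
    funext fun i => add_comm _ _
  rw [hfun]
  refine convexHull_mono ?_ hshift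
  rintro _ ⟨_, ⟨σ, rfl⟩, rfl⟩
  exact ⟨σ, funext fun i => by simp [onesV, add_comm]⟩

lemma perm_mem_permHull {v : V n} {x : Fin (n + 1) → ℝ} (hx : x ∈ permHull v)
    (τ : Equiv.Perm (Fin (n + 1))) : x ∘ τ ∈ permHull v := by
  have himg := Set.mem_image_of_mem (LinearMap.funLeft ℝ ℝ τ) hx
  rw [permHull, LinearMap.image_convexHull] at himg
  refine convexHull_mono ?_ himg
  rintro _ ⟨_, ⟨σ, rfl⟩, rfl⟩
  exact ⟨τ.trans σ, rfl⟩

lemma memPermHull_add_ones_right {u v : V n} (d : ℤ) :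
    MemPermHull u (v + d • onesV n) ↔ MemPermHull u v := by
  constructor
  · rintro ⟨c, hc⟩
    refine ⟨c - d, ?_⟩
    have := add_const_mem_permHull hc (-d)
    rw [neg_smul, add_neg_cancel_right] at this
    convert this using 2
    push_cast
    ring
  · rintro ⟨c, hc⟩
    exact ⟨c + d, by simpa only [add_assoc] using add_const_mem_permHull hc d⟩

lemma memPermHull_add_ones_left {u v : V n} (d : ℤ) :
    MemPermHull (u + d • onesV n) v ↔ MemPermHull u v := by
  have hshift (c : ℝ) : (fun i => (((u + d • onesV n) i : ℤ) : ℝ) + c) =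
      fun i => (u i : ℝ) + (d + c) := by
    funext i
    simp only [Pi.add_apply, Pi.smul_apply, smul_eq_mul, onesV, mul_one, Int.cast_add]
    ring
  constructor
  · rintro ⟨c, hc⟩
    exact ⟨d + c, by rwa [← hshift]⟩
  · rintro ⟨c, hc⟩
    exact ⟨c - d, by rwa [hshift, add_sub_cancel]⟩

lemma memPermHull_congr {u u' v v' : V n} (hu : toX n u = toX n u') (hv : toX n v = toX n v') :
    MemPermHull u v ↔ MemPermHull u' v' := by
  obtain ⟨d, rfl⟩ := toX_eq_toX_iff.1 hu
  obtain ⟨e, rfl⟩ := toX_eq_toX_iff.1 hv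
  rw [memPermHull_add_ones_left, memPermHull_add_ones_right]

lemma MemPermHull.comp_perm {u v : V n} (h : MemPermHull u v) (τ : Equiv.Perm (Fin (n + 1))) :
    MemPermHull (u ∘ τ) v :=
  let ⟨c, hc⟩ := h
  ⟨c, perm_mem_permHull hc τ⟩

lemma MemPermHull.sub_zsmul_of_le_of_le {u v w : V n} {k₁ k₂ k : ℤ}
    (h₁ : MemPermHull (u - k₁ • w) v) (h₂ : MemPermHull (u - k₂ • w) v)
    (hk₁ : k₁ ≤ k) (hk₂ : k ≤ k₂) : MemPermHull (u - k • w) v := by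
  obtain ⟨c₁, hc₁⟩ := h₁
  obtain ⟨c₂, hc₂⟩ := h₂
  rcases hk₁.eq_or_lt with rfl | hlt
  · exact ⟨c₁, hc₁⟩
  set t : ℝ := (k - k₁) / (k₂ - k₁)
  have hpos : (0 : ℝ) < k₂ - k₁ := by exact_mod_cast (by omega : (0 : ℤ) < k₂ - k₁)
  have ht : t * (k₂ - k₁) = k - k₁ := div_mul_cancel₀ _ hpos.ne'
  have ht0 : 0 ≤ t := div_nonneg (by exact_mod_cast sub_nonneg.2 hk₁) hpos.le
  have ht1 : t ≤ 1 := (div_le_one hpos).2 (by exact_mod_cast (by omega : k - k₁ ≤ k₂ - k₁))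
  clear_value t
  refine ⟨(1 - t) * c₁ + t * c₂, ?_⟩
  have hconv : Convex ℝ (permHull v) := convex_convexHull ℝ _
  convert hconv hc₁ hc₂ (sub_nonneg.2 ht1) ht0 (sub_add_cancel 1 t) using 1
  funext i
  simp only [Pi.add_apply, Pi.smul_apply, Pi.sub_apply, smul_eq_mul]
  push_cast
  linear_combination (w i : ℝ) * ht

lemma MemPermHull.sub_le {u v : V n} (h : MemPermHull u v) (a b : Fin (n + 1)) :
    u b - u a ≤ 2 * ∑ i, |v i| := by
  obtain ⟨c, hc⟩ := h
  set C : ℤ := 2 * ∑ i, |v i|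
  have hhalf : Convex ℝ {x : Fin (n + 1) → ℝ | x b - x a ≤ C} :=
    convex_halfSpace_le (f := fun x : Fin (n + 1) → ℝ => x b - x a)
      ⟨fun x y => by simp only [Pi.add_apply]; ring,
        fun r x => by simp only [Pi.smul_apply, smul_eq_mul]; ring⟩ _
  have hsub := convexHull_min (fun w (hw : ∃ σ : Equiv.Perm (Fin (n + 1)), _) => by
    obtain ⟨σ, rfl⟩ := hw
    have hle (j : Fin (n + 1)) : |v j| ≤ ∑ i, |v i| :=
      Finset.single_le_sum (f := fun i => |v i|) (fun i _ => abs_nonneg _) (Finset.mem_univ j)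
    have hb := (abs_le.1 (hle (σ b))).2
    have ha := (abs_le.1 (hle (σ a))).1
    show ((v (σ b) : ℤ) : ℝ) - v (σ a) ≤ (C : ℝ)
    exact_mod_cast (by omega : v (σ b) - v (σ a) ≤ C)) hhalf hc
  have : ((u b : ℤ) : ℝ) - u a ≤ C := by simp only [Set.mem_ofPred_eq] at hsub; linarith
  exact_mod_cast this

variable {a b : Fin (n + 1)} {μ lam : X n}

lemma wle_iff_memPermHull {κ : X n} {u v : V n} (hu : toX n u = κ) (hv : toX n v = lam) :
    wle n κ lam ↔ lam - κ ∈ rootLattice n ∧ MemPermHull u v := by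
  constructor
  · rintro ⟨hL, u', v', hu', hv', hc⟩
    exact ⟨hL, (memPermHull_congr (hu'.trans hu.symm) (hv'.trans hv.symm)).1 hc⟩
  · rintro ⟨hL, hc⟩
    exact ⟨hL, u, v, hu, hv, hc⟩

lemma wle_sub_zsmul_of_le_of_le {β : X n} (hβ : β ∈ rootLattice n) {k₁ k₂ k : ℤ}
    (h₁ : wle n (μ - k₁ • β) lam) (h₂ : wle n (μ - k₂ • β) lam) (hk₁ : k₁ ≤ k) (hk₂ : k ≤ k₂) :
    wle n (μ - k • β) lam := by
  obtain ⟨u, rfl⟩ := toX_surjective μ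
  obtain ⟨v, rfl⟩ := toX_surjective lam
  obtain ⟨w, rfl⟩ := toX_surjective β
  have hrep (j : ℤ) : toX n (u - j • w) = toX n u - j • toX n w := by
    rw [map_sub, map_zsmul]
  rw [wle_iff_memPermHull (hrep _) rfl] at h₁ h₂ ⊢
  refine ⟨?_, h₁.2.sub_zsmul_of_le_of_le h₂.2 hk₁ hk₂⟩
  have hdiff : toX n v - (toX n u - k • toX n w) =
      toX n v - (toX n u - k₁ • toX n w) + (k - k₁) • toX n w := by
    rw [sub_smul]
    abel
  rw [hdiff]
  exact add_mem h₁.1 (zsmul_mem hβ _)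

lemma wle_reflection (hab : a < b) (h : wle n μ lam) :
    wle n (μ - pairX n a b μ • posRootX n a b) lam := by
  obtain ⟨u, rfl⟩ := toX_surjective μ
  obtain ⟨v, rfl⟩ := toX_surjective lam
  have hrep : toX n (u ∘ Equiv.swap a b) =
      toX n u - pairX n a b (toX n u) • posRootX n a b := by
    rw [comp_swap_eq_sub_zsmul_posRootV u hab.ne, map_sub, map_zsmul, pairX_toX]
    rfl
  rw [wle_iff_memPermHull rfl rfl] at h
  rw [wle_iff_memPermHull hrep rfl, sub_sub_eq_add_sub, add_sub_right_comm]
  exact ⟨add_mem h.1 (zsmul_mem (posRootX_mem_rootLattice hab) _), h.2.comp_perm _⟩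

lemma wle_sub_zsmul_of_edgeToward (hab : a < b) (h : wle n μ lam) {k : ℤ}
    (he : edgeToward n a b k μ) : wle n (μ - k • posRootX n a b) lam := by
  have h₀ : wle n (μ - (0 : ℤ) • posRootX n a b) lam := by rwa [zero_smul, sub_zero]
  have hβ := posRootX_mem_rootLattice hab
  have hrefl := wle_reflection hab h
  rcases he with ⟨hk0, hkq⟩ | ⟨hk0, hqk⟩
  · exact wle_sub_zsmul_of_le_of_le hβ h₀ hrefl hk0.le hkq
  · exact wle_sub_zsmul_of_le_of_le hβ hrefl h₀ hqk.le hk0.le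

lemma bddBelow_pairX_setOf_wle (lam : X n) (a b : Fin (n + 1)) :
    BddBelow (pairX n a b '' {κ | wle n κ lam}) := by
  obtain ⟨v, rfl⟩ := toX_surjective lam
  refine ⟨-(2 * ∑ i, |v i|), ?_⟩
  rintro _ ⟨κ, hκ, rfl⟩
  obtain ⟨u, rfl⟩ := toX_surjective κ
  have := ((wle_iff_memPermHull rfl rfl).1 hκ).2.sub_le a b
  rw [pairX_toX]
  linarith

lemma exists_wle_sub_nsmul_iff_le (hab : a < b) (h : wle n μ lam) :
    ∃ M : ℕ, ∀ k : ℕ, wle n (μ - (k : ℤ) • posRootX n a b) lam ↔ k ≤ M := by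
  set T := {k : ℕ | wle n (μ - (k : ℤ) • posRootX n a b) lam}
  have h0 : 0 ∈ T := by simpa [T] using h
  obtain ⟨C, hC⟩ := bddBelow_pairX_setOf_wle lam a b
  have hbdd : BddAbove T := by
    refine ⟨(pairX n a b μ - C).toNat, fun k hk => ?_⟩
    have hCk := hC ⟨_, hk, rfl⟩
    rw [map_sub, map_zsmul, pairX_posRootX hab.ne, smul_eq_mul] at hCk
    omega
  refine ⟨sSup T, fun k => ⟨fun hk => le_csSup hbdd hk, fun hk => ?_⟩⟩
  exact wle_sub_zsmul_of_le_of_le (posRootX_mem_rootLattice hab) (k₁ := (0 : ℕ)) h0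
    (Nat.sSup_mem ⟨0, h0⟩ hbdd) (by positivity) (by exact_mod_cast hk)

lemma dirToward_top_last_iff {k : ℤ} (hk : k ≠ 0) :
    dirToward n ⊤ a (Fin.last n) k μ ↔ 0 < k := by
  show Xor _ _ ↔ _
  simp only [xor_def, IsTwisted, edgeToward, le_top, and_true, true_and]
  omega

lemma dirToward_top_iff_of_ne_last (hb : b ≠ Fin.last n) {k : ℤ} :
    dirToward n ⊤ a b k μ ↔ edgeToward n a b k μ := by
  show Xor _ _ ↔ _
  simp [xor_def, IsTwisted, hb]

lemma setOf_edgeToward_eq (a b : Fin (n + 1)) (μ : X n) :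
    {k | edgeToward n a b k μ} = ↑(if 0 ≤ pairX n a b μ then Finset.Icc 1 (pairX n a b μ)
      else Finset.Ioo (pairX n a b μ) 0) := by
  ext k
  split_ifs <;> simp only [edgeToward, Set.mem_ofPred_eq, Finset.coe_Icc, Finset.coe_Ioo,
    Set.mem_Icc, Set.mem_Ioo] <;> omega

lemma ncard_setOf_edgeToward (a b : Fin (n + 1)) (μ : X n) :
    {k | edgeToward n a b k μ}.ncard = ellBeta n a b μ := by
  rw [setOf_edgeToward_eq, Set.ncard_coe_finset, ellBeta]
  split_ifs
  · rw [Int.card_Icc, add_sub_cancel_right]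
  · rw [Int.card_Ioo, zero_sub]

lemma finite_setOf_edgeToward (a b : Fin (n + 1)) (μ : X n) :
    {k | edgeToward n a b k μ}.Finite := by
  rw [setOf_edgeToward_eq]
  exact Finset.finite_toSet _

def arrowFiber (m : ℕ∞) (μ lam : X n) (a b : Fin (n + 1)) : Set ℤ :=
  {k | k ≠ 0 ∧ wle n (μ - k • posRootX n a b) lam ∧ dirToward n m a b k μ}

lemma arrRes_eq_sum (m : ℕ∞) (hfin : ∀ a b, a < b → (arrowFiber m μ lam a b).Finite) :
    ArrRes n m μ lam =
      ∑ p ∈ Finset.univ.filter (fun p : Fin (n + 1) × Fin (n + 1) => p.1 < p.2),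
        (arrowFiber m μ lam p.1 p.2).ncard :=
  ncard_setOf_fst_snd_eq_sum (fun p : Fin (n + 1) × Fin (n + 1) => p.1 < p.2)
    (fun p => arrowFiber m μ lam p.1 p.2) fun p => hfin p.1 p.2

lemma arrowFiber_top_last (ha : a < Fin.last n) (h : wle n μ lam) :
    arrowFiber ⊤ μ lam a (Fin.last n) =
      Set.Icc 1 ((sSup {k : ℕ | wle n (μ - (k : ℤ) • posRootX n a (Fin.last n)) lam} : ℕ) : ℤ) := by
  obtain ⟨M, hM⟩ := exists_wle_sub_nsmul_iff_le ha h
  have hsup : sSup {k : ℕ | wle n (μ - (k : ℤ) • posRootX n a (Fin.last n)) lam} = M := by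
    simp_rw [hM]
    exact csSup_Iic
  rw [hsup]
  ext k
  simp only [arrowFiber, Set.mem_ofPred_eq, Set.mem_Icc]
  constructor
  · rintro ⟨hk0, hw, hd⟩
    have hk := (dirToward_top_last_iff hk0).1 hd
    lift k to ℕ using hk.le
    exact ⟨by omega, by exact_mod_cast (hM k).1 hw⟩
  · rintro ⟨hk1, hkM⟩
    lift k to ℕ using (by omega)
    exact ⟨by omega, (hM k).2 (by omega), (dirToward_top_last_iff (by omega)).2 (by omega)⟩

lemma arrowFiber_top_of_ne_last (hab : a < b) (hb : b ≠ Fin.last n) (h : wle n μ lam) :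
    arrowFiber ⊤ μ lam a b = {k | edgeToward n a b k μ} := by
  ext k
  simp only [arrowFiber, Set.mem_ofPred_eq, dirToward_top_iff_of_ne_last hb]
  refine ⟨fun hk => hk.2.2, fun he => ⟨?_, wle_sub_zsmul_of_edgeToward hab h he, he⟩⟩
  rcases he with ⟨hk, -⟩ | ⟨hk, -⟩ <;> omega

lemma finite_arrowFiber_top (hab : a < b) (h : wle n μ lam) :
    (arrowFiber ⊤ μ lam a b).Finite := by
  induction b using Fin.lastCases with
  | last =>
    rw [arrowFiber_top_last hab h]
    exact Set.finite_Icc _ _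
  | cast j =>
    rw [arrowFiber_top_of_ne_last hab (Fin.castSucc_lt_last j).ne h]
    exact finite_setOf_edgeToward a _ μ

lemma ncard_Icc_one_natCast (M : ℕ) : (Set.Icc (1 : ℤ) M).ncard = M := by
  rw [← Finset.coe_Icc, Set.ncard_coe_finset, Int.card_Icc, add_sub_cancel_right, Int.toNat_natCast]

end TypeATwisted

open TypeATwisted

theorem statement11_general (n : ℕ) (lam μ : X n) (hμle : wle n μ lam) :
    ArrRes n ⊤ μ lam =
      (∑ j : Fin n,
        sSup {k : ℕ | wle n (μ - (k : ℤ) • posRootX n (Fin.castSucc j) (Fin.last n)) lam}) +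
      ∑ p ∈ Finset.univ.filter (fun p : Fin n × Fin n => p.1 < p.2),
        ellBeta n (Fin.castSucc p.1) (Fin.castSucc p.2) μ := by
  rw [arrRes_eq_sum ⊤ fun a b hab => finite_arrowFiber_top hab hμle,
    sum_filter_lt_fin_succ fun a b => (arrowFiber ⊤ μ lam a b).ncard]
  congr 1
  · refine Finset.sum_congr rfl fun j _ => ?_
    rw [arrowFiber_top_last (Fin.castSucc_lt_last j) hμle, ncard_Icc_one_natCast]
  · refine Finset.sum_congr rfl fun p hp => ?_
    have hlt : p.1.castSucc < p.2.castSucc :=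
      Fin.castSucc_lt_castSucc_iff.2 (Finset.mem_filter.1 hp).2
    rw [arrowFiber_top_of_ne_last hlt (Fin.castSucc_lt_last _).ne hμle, ncard_setOf_edgeToward]

/-- for `λ` dominant and `μ ≤ λ`,
`Arr_∞(μ,λ) = Σ_{j=1}^{n} max{k ∈ ℕ : μ − k·α_{j,n} ≤ λ} + Σ_β ℓ^β(μ)`,
where the second sum runs over the positive roots of the sub-root system generated by
`α_1, …, α_{n−1}` (i.e. the roots `e_a − e_b` with `a < b` both distinct from the last
index). -/
theorem statement11 (n : ℕ) (hn : 2 ≤ n) (lam μ : X n)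
    (hlam : IsDominant n lam) (hμle : wle n μ lam) :
    ArrRes n ⊤ μ lam =
      (∑ j : Fin n,
        sSup {k : ℕ | wle n (μ - (k : ℤ) • posRootX n (Fin.castSucc j) (Fin.last n)) lam}) +
      ∑ p ∈ Finset.univ.filter (fun p : Fin n × Fin n => p.1 < p.2),
        ellBeta n (Fin.castSucc p.1) (Fin.castSucc p.2) μ :=
  statement11_general n lam μ hμle
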